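/- arXiv:1509.04584 — 2 statements merged into one kernel-verified Lean document; each statement's English description precedes it below -/
import Mathlib

section
/- The Tits form q_λ of the staircase algebra A(3,3,3) (the 3×3 commutative grid) is non-negative on all of Z^9. -/
def isBox (lam : ℕ → ℕ) (p : ℕ × ℕ) : Prop :=
  1 ≤ p.1 ∧ p.1 ≤ lam p.2 ∧ 1 ≤ p.2

instance (lam : ℕ → ℕ) : DecidablePred (isBox lam) := fun p =>
  inferInstanceAs (Decidable (1 ≤ p.1 ∧ p.1 ≤ lam p.2 ∧ 1 ≤ p.2))

def verts (lam : ℕ → ℕ) (R : ℕ) : Finset (ℕ × ℕ) :=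
  (Finset.Icc 1 R ×ˢ Finset.Icc 1 R).filter (isBox lam)

/-- The Tits form of the staircase algebra with row lengths `lam` (boxes contained in
the `R × R` square): sum of squares over vertices, minus products over horizontal and
vertical arrows, plus products over the diagonals of the unit squares (one
commutativity relation per unit square). -/
def titsForm (lam : ℕ → ℕ) (R : ℕ) (v : ℕ × ℕ → ℤ) : ℤ :=
  (∑ p ∈ verts lam R, (v p) ^ 2)
  - (∑ p ∈ (verts lam R).filter (fun p => 2 ≤ p.1 ∧ isBox lam (p.1 - 1, p.2)),
      v p * v (p.1 - 1, p.2))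
  - (∑ p ∈ (verts lam R).filter (fun p => 2 ≤ p.2 ∧ isBox lam (p.1, p.2 - 1)),
      v p * v (p.1, p.2 - 1))
  + (∑ p ∈ (verts lam R).filter (fun p => 2 ≤ p.1 ∧ 2 ≤ p.2 ∧
        isBox lam (p.1 - 1, p.2) ∧ isBox lam (p.1, p.2 - 1) ∧
        isBox lam (p.1 - 1, p.2 - 1)),
      v p * v (p.1 - 1, p.2 - 1))

def lam33 : ℕ → ℕ := fun j => if j ≤ 3 then 3 else 0

/- The Tits form is a positive semidefinite quadratic form of rank 7. Completing squares in the
order (1,1), (2,1), (3,1), (1,2), (2,2), (3,2), (1,3) (an `LDLᵀ` decomposition of its Gram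
matrix) writes `120 q` as a sum of seven squares with positive weights. -/

section GridForm

variable {R : Type*} [CommRing R]

def gridForm (v : ℕ × ℕ → R) : R :=
  v (1,1) ^ 2 + v (2,1) ^ 2 + v (3,1) ^ 2 + v (1,2) ^ 2 + v (2,2) ^ 2 + v (3,2) ^ 2
    + v (1,3) ^ 2 + v (2,3) ^ 2 + v (3,3) ^ 2
  - (v (2,1) * v (1,1) + v (3,1) * v (2,1) + v (2,2) * v (1,2) + v (3,2) * v (2,2)
    + v (2,3) * v (1,3) + v (3,3) * v (2,3))
  - (v (1,2) * v (1,1) + v (2,2) * v (2,1) + v (3,2) * v (3,1) + v (1,3) * v (1,2)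
    + v (2,3) * v (2,2) + v (3,3) * v (3,2))
  + (v (2,2) * v (1,1) + v (3,2) * v (2,1) + v (2,3) * v (1,2) + v (3,3) * v (2,2))

theorem gridForm_mul_120 (v : ℕ × ℕ → R) :
    120 * gridForm v =
      30 * (2 * v (1,1) - v (2,1) - v (1,2) + v (2,2)) ^ 2
      + 10 * (3 * v (2,1) - 2 * v (3,1) - v (1,2) - v (2,2) + 2 * v (3,2)) ^ 2
      + 5 * (4 * v (3,1) - v (1,2) - v (2,2) - v (3,2)) ^ 2
      + 3 * (5 * v (1,2) - 3 * v (2,2) + v (3,2) - 4 * v (1,3) + 4 * v (2,3)) ^ 2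
      + 3 * (4 * v (2,2) - 3 * v (3,2) - 3 * v (1,3) - 2 * v (2,3) + 5 * v (3,3)) ^ 2
      + 5 * (3 * v (3,2) - v (1,3) - 2 * v (2,3) - v (3,3)) ^ 2
      + 40 * (v (1,3) - v (2,3) + v (3,3)) ^ 2 := by
  unfold gridForm
  ring

theorem gridForm_nonneg [LinearOrder R] [IsStrictOrderedRing R] (v : ℕ × ℕ → R) :
    0 ≤ gridForm v := by
  have h : 0 ≤ 120 * gridForm v := by
    rw [gridForm_mul_120]
    positivity
  exact nonneg_of_mul_nonneg_right h (by norm_num)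

end GridForm

theorem verts_lam33_three :
    verts lam33 3 = {(1,1), (2,1), (3,1), (1,2), (2,2), (3,2), (1,3), (2,3), (3,3)} := by
  decide

theorem titsForm_lam33_three (v : ℕ × ℕ → ℤ) : titsForm lam33 3 v = gridForm v := by
  have horizontal : (verts lam33 3).filter (fun p => 2 ≤ p.1 ∧ isBox lam33 (p.1 - 1, p.2)) =
      {(2,1), (3,1), (2,2), (3,2), (2,3), (3,3)} := by decide
  have vertical : (verts lam33 3).filter (fun p => 2 ≤ p.2 ∧ isBox lam33 (p.1, p.2 - 1)) =
      {(1,2), (2,2), (3,2), (1,3), (2,3), (3,3)} := by decide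
  have squares : (verts lam33 3).filter (fun p => 2 ≤ p.1 ∧ 2 ≤ p.2 ∧
        isBox lam33 (p.1 - 1, p.2) ∧ isBox lam33 (p.1, p.2 - 1) ∧
        isBox lam33 (p.1 - 1, p.2 - 1)) = {(2,2), (3,2), (2,3), (3,3)} := by decide
  rw [titsForm, horizontal, vertical, squares, verts_lam33_three]
  simp +decide only [Finset.mem_insert, Finset.mem_singleton, not_false_eq_true,
    Finset.sum_insert, Finset.sum_singleton, Nat.add_one_sub_one]
  unfold gridForm
  ring

theorem stmt8 : ∀ v : ℕ × ℕ → ℤ, 0 ≤ titsForm lam33 3 v := by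
  intro v
  rw [titsForm_lam33_three]
  exact gridForm_nonneg v
end

section
/- The Tits form of the staircase algebra A(5,5) (the 2×5 commutative grid quiver) is non-negative on Z^{10}, and its radical contains the two vectors with rows (2,3,2,0,−1)/(1,0,−2,−3,−2) and (0,1,2,2,1)/(1,2,2,1,0). -/
def lam55 : ℕ → ℕ := fun j => if j ≤ 2 then 5 else 0

def u1 : ℕ × ℕ → ℤ := fun p =>
  match p with
  | (1, 1) => -2 | (2, 1) => -3 | (3, 1) => -2 | (4, 1) => 0 | (5, 1) => 1
  | (1, 2) => -1 | (2, 2) => 0 | (3, 2) => 2 | (4, 2) => 3 | (5, 2) => 2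
  | _ => 0

def u2 : ℕ × ℕ → ℤ := fun p =>
  match p with
  | (1, 1) => 0 | (2, 1) => 1 | (3, 1) => 2 | (4, 1) => 2 | (5, 1) => 1
  | (1, 2) => 1 | (2, 2) => 2 | (3, 2) => 2 | (4, 2) => 1 | (5, 2) => 0
  | _ => 0

/-! Completing squares in the Gram matrix of `q` (pivots `1/4, 1/12, 1/24, 1/40, 1/60, 1/84, 1/56,
1/8`) writes `840 q` as a positive combination of eight squares of integer linear forms, so `q ≥ 0`.
For a non-negative form every isotropic vector is radical: if `q u = 0`, then
`q (n u + w) = n B(u, w) + q w ≥ 0` for all `n ∈ ℤ` forces the polar form `B(u, w)` to vanish.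
Both displayed vectors are isotropic by evaluation. -/

open Finset

section Polar

variable (lam : ℕ → ℕ) (R : ℕ)

def titsPolar (u w : ℕ × ℕ → ℤ) : ℤ :=
  (∑ p ∈ verts lam R, 2 * u p * w p)
  - (∑ p ∈ (verts lam R).filter (fun p => 2 ≤ p.1 ∧ isBox lam (p.1 - 1, p.2)),
      (u p * w (p.1 - 1, p.2) + w p * u (p.1 - 1, p.2)))
  - (∑ p ∈ (verts lam R).filter (fun p => 2 ≤ p.2 ∧ isBox lam (p.1, p.2 - 1)),
      (u p * w (p.1, p.2 - 1) + w p * u (p.1, p.2 - 1)))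
  + (∑ p ∈ (verts lam R).filter (fun p => 2 ≤ p.1 ∧ 2 ≤ p.2 ∧
        isBox lam (p.1 - 1, p.2) ∧ isBox lam (p.1, p.2 - 1) ∧
        isBox lam (p.1 - 1, p.2 - 1)),
      (u p * w (p.1 - 1, p.2 - 1) + w p * u (p.1 - 1, p.2 - 1)))

theorem titsForm_add (u w : ℕ × ℕ → ℤ) :
    titsForm lam R (fun p => u p + w p) =
      titsForm lam R u + titsForm lam R w + titsPolar lam R u w := by
  simp only [titsForm, titsPolar, add_sq, add_mul, mul_add, sum_add_distrib]
  ring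

theorem titsForm_mul (n : ℤ) (u : ℕ × ℕ → ℤ) :
    titsForm lam R (fun p => n * u p) = n ^ 2 * titsForm lam R u := by
  have h : ∀ a b : ℤ, n * a * (n * b) = n ^ 2 * (a * b) := fun a b => by ring
  simp only [titsForm, mul_pow, h, ← mul_sum]
  ring

theorem titsPolar_mul_left (n : ℤ) (u w : ℕ × ℕ → ℤ) :
    titsPolar lam R (fun p => n * u p) w = n * titsPolar lam R u w := by
  have h₁ : ∀ a b : ℤ, 2 * (n * a) * b = n * (2 * a * b) := fun a b => by ring
  have h₂ : ∀ a b c d : ℤ, n * a * b + c * (n * d) = n * (a * b + c * d) := fun a b c d => by ring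
  simp only [titsPolar, h₁, h₂, ← mul_sum]
  ring

end Polar

theorem eq_zero_of_forall_mul_add_nonneg {b c : ℤ} (h : ∀ n : ℤ, 0 ≤ n * b + c) : b = 0 := by
  by_contra hb
  have hc : 0 ≤ c := by simpa using h 0
  have hb2 : 0 < b ^ 2 := by positivity
  nlinarith [h (-b * (c + 1)), mul_nonneg (by omega : 0 ≤ b ^ 2 - 1) (by omega : 0 ≤ c + 1)]

theorem titsForm_add_left_of_nonneg_of_eq_zero {lam : ℕ → ℕ} {R : ℕ} {u : ℕ × ℕ → ℤ}
    (hq : ∀ v, 0 ≤ titsForm lam R v) (hu : titsForm lam R u = 0) (w : ℕ × ℕ → ℤ) :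
    titsForm lam R (fun p => u p + w p) = titsForm lam R w := by
  have hpolar : titsPolar lam R u w = 0 := by
    refine eq_zero_of_forall_mul_add_nonneg (c := titsForm lam R w) fun n => ?_
    have h := hq (fun p => n * u p + w p)
    rw [titsForm_add, titsForm_mul, titsPolar_mul_left, hu] at h
    linarith
  rw [titsForm_add, hu, hpolar, zero_add, add_zero]

theorem titsForm_lam55 (v : ℕ × ℕ → ℤ) : titsForm lam55 5 v =
    (v (1,1)^2 + v (2,1)^2 + v (3,1)^2 + v (4,1)^2 + v (5,1)^2
     + v (1,2)^2 + v (2,2)^2 + v (3,2)^2 + v (4,2)^2 + v (5,2)^2)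
  - (v (2,1)*v (1,1) + v (3,1)*v (2,1) + v (4,1)*v (3,1) + v (5,1)*v (4,1)
     + v (2,2)*v (1,2) + v (3,2)*v (2,2) + v (4,2)*v (3,2) + v (5,2)*v (4,2))
  - (v (1,2)*v (1,1) + v (2,2)*v (2,1) + v (3,2)*v (3,1) + v (4,2)*v (4,1) + v (5,2)*v (5,1))
  + (v (2,2)*v (1,1) + v (3,2)*v (2,1) + v (4,2)*v (3,1) + v (5,2)*v (4,1)) := by
  have hverts : verts lam55 5 =
      ({(1,1),(2,1),(3,1),(4,1),(5,1),(1,2),(2,2),(3,2),(4,2),(5,2)} : Finset (ℕ × ℕ)) := by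
    decide
  have hhorizontal : (verts lam55 5).filter (fun p => 2 ≤ p.1 ∧ isBox lam55 (p.1 - 1, p.2)) =
      ({(2,1),(3,1),(4,1),(5,1),(2,2),(3,2),(4,2),(5,2)} : Finset (ℕ × ℕ)) := by
    decide
  have hvertical : (verts lam55 5).filter (fun p => 2 ≤ p.2 ∧ isBox lam55 (p.1, p.2 - 1)) =
      ({(1,2),(2,2),(3,2),(4,2),(5,2)} : Finset (ℕ × ℕ)) := by
    decide
  have hsquares : (verts lam55 5).filter (fun p => 2 ≤ p.1 ∧ 2 ≤ p.2 ∧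
        isBox lam55 (p.1 - 1, p.2) ∧ isBox lam55 (p.1, p.2 - 1) ∧
        isBox lam55 (p.1 - 1, p.2 - 1)) =
      ({(2,2),(3,2),(4,2),(5,2)} : Finset (ℕ × ℕ)) := by
    decide
  rw [titsForm, hhorizontal, hvertical, hsquares, hverts]
  simp +decide only [mem_insert, mem_singleton, sum_insert, sum_singleton,
    not_false_eq_true, Nat.add_one_sub_one]
  ring

theorem titsForm_lam55_u1 : titsForm lam55 5 u1 = 0 := by decide

theorem titsForm_lam55_u2 : titsForm lam55 5 u2 = 0 := by decide

theorem titsForm_lam55_mul_840 (v : ℕ × ℕ → ℤ) :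
    840 * titsForm lam55 5 v =
      210 * (2 * v (1,1) - v (2,1) - v (1,2) + v (2,2)) ^ 2
      + 70 * (3 * v (2,1) - 2 * v (3,1) - v (1,2) - v (2,2) + 2 * v (3,2)) ^ 2
      + 35 * (4 * v (3,1) - 3 * v (4,1) - v (1,2) - v (2,2) - v (3,2) + 3 * v (4,2)) ^ 2
      + 21 * (5 * v (4,1) - 4 * v (5,1) - v (1,2) - v (2,2) - v (3,2) - v (4,2)
          + 4 * v (5,2)) ^ 2
      + 14 * (6 * v (5,1) - v (1,2) - v (2,2) - v (3,2) - v (4,2) - v (5,2)) ^ 2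
      + 10 * (7 * v (1,2) - 5 * v (2,2) + v (3,2) + v (4,2) + v (5,2)) ^ 2
      + 15 * (4 * v (2,2) - 5 * v (3,2) + 2 * v (4,2) + 2 * v (5,2)) ^ 2
      + 105 * (v (3,2) - 2 * v (4,2) + 2 * v (5,2)) ^ 2 := by
  rw [titsForm_lam55]
  ring

theorem titsForm_lam55_nonneg (v : ℕ × ℕ → ℤ) : 0 ≤ titsForm lam55 5 v := by
  have h : 0 ≤ 840 * titsForm lam55 5 v := by
    rw [titsForm_lam55_mul_840]
    positivity
  omega

theorem stmt9 :
    (∀ v : ℕ × ℕ → ℤ, 0 ≤ titsForm lam55 5 v) ∧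
    (∀ w : ℕ × ℕ → ℤ, titsForm lam55 5 (fun p => u1 p + w p) = titsForm lam55 5 w) ∧
    (∀ w : ℕ × ℕ → ℤ, titsForm lam55 5 (fun p => u2 p + w p) = titsForm lam55 5 w) :=
  ⟨titsForm_lam55_nonneg,
    titsForm_add_left_of_nonneg_of_eq_zero titsForm_lam55_nonneg titsForm_lam55_u1,
    titsForm_add_left_of_nonneg_of_eq_zero titsForm_lam55_nonneg titsForm_lam55_u2⟩
end
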